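/- Erdős space 𝔈 can be written as a countable union of sets that are each nowhere dense in 𝔈 and each a C-set in 𝔈: there exists a sequence (C_n) of subsets of 𝔈 with ⋃_n C_n = 𝔈 such that every C_n is nowhere dense in 𝔈 and is an intersection of clopen subsets of 𝔈. -/

import Mathlib

open Topology Filter Set

/-- A C-set in a topological space is an intersection of clopen subsets. -/
def IsCSet {X : Type*} [TopologicalSpace X] (C : Set X) : Prop :=
  ∃ 𝒮 : Set (Set X), (∀ s ∈ 𝒮, IsClopen s) ∧ C = ⋂₀ 𝒮

/-- Erdős space: the rational points of the real Hilbert space ℓ². -/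
def ErdosSpace : Set (lp (fun _ : ℕ => ℝ) 2) :=
  {x | ∀ n : ℕ, ∃ q : ℚ, x n = (q : ℝ)}

/-! The sets `C q = {x ∈ 𝔈 : x₀ = q}`, `q ∈ ℚ`, cover `𝔈`. The coordinate `x ↦ x₀` is a continuous
map from `𝔈` to `ℚ`, and `ℚ` is totally separated, so its fibres are C-sets. They are closed with
empty interior, because adding a small rational to `x₀` moves a point of `𝔈` off its fibre while
staying in `𝔈`. -/

theorem IsCSet.preimage {X Y : Type*} [TopologicalSpace X] [TopologicalSpace Y] {f : X → Y}
    (hf : Continuous f) {C : Set Y} (hC : IsCSet C) : IsCSet (f ⁻¹' C) := by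
  obtain ⟨𝒮, hclopen, rfl⟩ := hC
  refine ⟨Set.preimage f '' 𝒮, ?_, by rw [preimage_sInter, sInter_image]⟩
  rintro _ ⟨s, hs, rfl⟩
  exact (hclopen s hs).preimage hf

theorem isCSet_singleton {X : Type*} [TopologicalSpace X] [TotallySeparatedSpace X] (x : X) :
    IsCSet ({x} : Set X) := by
  refine ⟨{s | IsClopen s ∧ x ∈ s}, fun s hs => hs.1, Subset.antisymm ?_ ?_⟩
  · rintro _ rfl s ⟨-, hx⟩
    exact hx
  · intro y hy
    by_contra hyx
    obtain ⟨U, hU, hxU, hyU⟩ := exists_isClopen_of_totally_separated (Ne.symm hyx)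
    exact hyU (hy U ⟨hU, hxU⟩)

namespace ErdosSpace

local notation "ℓ²" => lp (fun _ : ℕ => ℝ) 2

theorem add_single_mem {x : ℓ²} (hx : x ∈ ErdosSpace) (i : ℕ) (q : ℚ) :
    x + lp.single 2 i (q : ℝ) ∈ ErdosSpace := by
  intro k
  obtain ⟨r, hr⟩ := hx k
  rcases eq_or_ne k i with rfl | hk
  · exact ⟨r + q, by simp [hr]⟩
  · exact ⟨r, by simp [hr, Pi.single_eq_of_ne hk]⟩

noncomputable def coord (i : ℕ) (x : ErdosSpace) : ℚ :=
  (x.2 i).choose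

theorem coe_coord (i : ℕ) (x : ErdosSpace) : (coord i x : ℝ) = (x : ℓ²) i :=
  (x.2 i).choose_spec.symm

theorem continuous_coord (i : ℕ) : Continuous (coord i) := by
  rw [Rat.isEmbedding_coe_real.continuous_iff]
  have hcoe : ((↑) : ℚ → ℝ) ∘ coord i =
      fun x : ErdosSpace => lp.evalCLM ℝ (fun _ : ℕ => ℝ) 2 i (x : ℓ²) :=
    funext (coe_coord i)
  rw [hcoe]
  fun_prop

theorem coord_add_single (i : ℕ) (x : ErdosSpace) (q : ℚ) :
    coord i ⟨_, add_single_mem x.2 i q⟩ = coord i x + q := by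
  apply Rat.cast_injective (α := ℝ)
  push_cast
  simp [coe_coord]

theorem interior_coord_preimage_singleton (i : ℕ) (q : ℚ) :
    interior (coord i ⁻¹' {q}) = ∅ := by
  refine eq_empty_iff_forall_notMem.2 fun x hx => ?_
  obtain ⟨ε, hε, hball⟩ := Metric.mem_nhds_iff.mp (mem_interior_iff_mem_nhds.mp hx)
  obtain ⟨δ, hδ, hδε⟩ := exists_rat_btwn hε
  have hdist : dist (⟨_, add_single_mem x.2 i δ⟩ : ErdosSpace) x < ε := by
    rwa [Subtype.dist_eq, dist_eq_norm, add_sub_cancel_left,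
      lp.norm_single (by norm_num), Real.norm_eq_abs, abs_of_pos hδ]
  have hmoved := hball (Metric.mem_ball.mpr hdist)
  have hx' := interior_subset hx
  simp only [mem_preimage, mem_singleton_iff, coord_add_single] at hmoved hx'
  rw [hx', add_eq_left] at hmoved
  simp [hmoved] at hδ

theorem isNowhereDense_coord_preimage_singleton (i : ℕ) (q : ℚ) :
    IsNowhereDense (coord i ⁻¹' {q}) :=
  ((isClosed_singleton.preimage (continuous_coord i)).isNowhereDense_iff).2
    (interior_coord_preimage_singleton i q)

end ErdosSpace

/-- Erdős space is a countable union of nowhere dense C-sets. -/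
theorem stmt10 :
    ∃ C : ℕ → Set ↥ErdosSpace,
      (⋃ n, C n) = Set.univ ∧
      ∀ n, IsNowhereDense (C n) ∧ IsCSet (C n) := by
  refine ⟨fun n => ErdosSpace.coord 0 ⁻¹' {Denumerable.ofNat ℚ n}, ?_, fun n => ⟨?_, ?_⟩⟩
  · refine iUnion_eq_univ_iff.2 fun x => ?_
    obtain ⟨n, hn⟩ := (Denumerable.eqv ℚ).symm.surjective (ErdosSpace.coord 0 x)
    exact ⟨n, hn.symm⟩
  · exact ErdosSpace.isNowhereDense_coord_preimage_singleton 0 _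
  · exact (isCSet_singleton _).preimage (ErdosSpace.continuous_coord 0)
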